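/- arXiv:1511.09147 — 3 statements merged into one kernel-verified Lean document; each statement's English description precedes it below -/
import Mathlib

section
/- Let β be a factored distribution β(s) = ∏ₗ βₗ(sₗ) on a finite product space, and let the transition kernel factor as T(s'|s,a) = ∏ₗ Tₗ(s'ₗ|sₗ,a) and the observation probability depend only on component k: O(o|a,s') = O_k(o|a,s'_k). Then the Bayesian posterior β'(s') = O(o|a,s')·∑ₛ β(s)T(s'|s,a) / ∑_{s''} O(o|a,s'')·∑ₛ β(s)T(s''|s,a), whenever the denominator is nonzero, is again factored: β'(s') = β'_k(s'_k)·∏_{l≠k} β'_l(s'_l), where β'_k(s'_k) = O_k(o|a,s'_k)∑_{s_k} β_k(s_k)T_k(s'_k|s_k,a) / (normalizing constant) and β'_l(s'_l) = ∑_{s_l} β_l(s_l)T_l(s'_l|s_l,a) for l ≠ k. -/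
/-- Sum over a finite product space of a product of per-coordinate functions
equals the product of per-coordinate sums. -/
lemma pi_sum_prod {K : ℕ} [DecidableEq (Fin K)] (S : Fin K → Type) [∀ k, Fintype (S k)]
    (f : ∀ l, S l → ℝ) :
    ∑ s : ∀ l, S l, ∏ l, f l (s l) = ∏ l, ∑ x, f l x := by
  rw [Finset.prod_univ_sum, Fintype.piFinset_univ]

/-- a factored belief stays factored under the Bayesian update with
factored transitions and an observation model depending only on component k
(for a fixed action a and observation o, encoded by fixing them). -/
theorem factored_bayes_update
    {K : ℕ} (S : Fin K → Type) [∀ k, Fintype (S k)] [∀ k, Nonempty (S k)]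
    [DecidableEq (Fin K)]
    (k : Fin K)
    (β : (∀ l, S l) → ℝ) (βl : ∀ l, S l → ℝ)
    (T : (∀ l, S l) → (∀ l, S l) → ℝ)  -- T s' s  =  T(s'|s,a)
    (Tl : ∀ l, S l → S l → ℝ)          -- Tl l x' x = Tₗ(x'ₗ|xₗ,a)
    (O : (∀ l, S l) → ℝ)               -- O s' = O(o|a,s')
    (Ok : S k → ℝ)                     -- Ok x' = O_k(o|a,x')
    (hβnn : ∀ l x, 0 ≤ βl l x) (hβsum : ∀ l, ∑ x, βl l x = 1)
    (hTnn : ∀ l x' x, 0 ≤ Tl l x' x) (hTsum : ∀ l x, ∑ x', Tl l x' x = 1)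
    (hOnn : ∀ x, 0 ≤ Ok x)
    (hfact : ∀ s, β s = ∏ l, βl l (s l))
    (hT : ∀ s' s, T s' s = ∏ l, Tl l (s' l) (s l))
    (hO : ∀ s', O s' = Ok (s' k))
    (Z : ℝ)
    (hZ : Z = ∑ s' : ∀ l, S l, O s' * ∑ s : ∀ l, S l, β s * T s' s)
    (hZne : Z ≠ 0)
    (β' : (∀ l, S l) → ℝ)
    (hβ' : ∀ s', β' s' = O s' * (∑ s : ∀ l, S l, β s * T s' s) / Z) :
    ∀ s' : ∀ l, S l,
      β' s' =
        (Ok (s' k) * (∑ x : S k, βl k x * Tl k (s' k) x)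
            / ∑ x' : S k, Ok x' * ∑ x : S k, βl k x * Tl k x' x)
        * ∏ l ∈ Finset.univ.erase k, ∑ x : S l, βl l x * Tl l (s' l) x := by
  -- predicted marginals
  set M : ∀ l, S l → ℝ := fun l y => ∑ x, βl l x * Tl l y x with hM
  -- each marginal sums to 1
  have hMsum : ∀ l, ∑ y, M l y = 1 := by
    intro l
    rw [hM]
    rw [Finset.sum_comm]
    simp [← Finset.mul_sum, hTsum, hβsum]
  -- the prediction step factorizes
  have hpred : ∀ s', (∑ s : ∀ l, S l, β s * T s' s) = ∏ l, M l (s' l) := by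
    intro s'
    have : ∀ s : ∀ l, S l, β s * T s' s = ∏ l, βl l (s l) * Tl l (s' l) (s l) := by
      intro s
      rw [hfact, hT, Finset.prod_mul_distrib]
    rw [Finset.sum_congr rfl (fun s _ => this s)]
    exact pi_sum_prod S (fun l x => βl l x * Tl l (s' l) x)
  -- a weight function that is Ok at coordinate k and 1 elsewhere
  set w : ∀ l, S l → ℝ := fun l => if h : l = k then fun y => Ok (h ▸ y) else fun _ => 1
    with hw
  have hwk : ∀ y : S k, w k y = Ok y := by intro y; simp [hw]
  have hwl : ∀ l, l ≠ k → ∀ y : S l, w l y = 1 := by intro l hl y; simp [hw, hl]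
  -- rewrite the observation factor as a product of weights
  have hOw : ∀ s' : ∀ l, S l, Ok (s' k) * ∏ l, M l (s' l)
      = ∏ l, w l (s' l) * M l (s' l) := by
    intro s'
    rw [Finset.prod_mul_distrib]
    congr 1
    rw [Finset.prod_eq_single k (fun l _ hl => hwl l hl (s' l)) (by simp)]
    exact (hwk (s' k)).symm
  -- compute Z
  have hZk : Z = ∑ x' : S k, Ok x' * M k x' := by
    rw [hZ]
    have : ∀ s' : ∀ l, S l, O s' * ∑ s : ∀ l, S l, β s * T s' s
        = ∏ l, w l (s' l) * M l (s' l) := by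
      intro s'; rw [hO, hpred, hOw]
    rw [Finset.sum_congr rfl (fun s' _ => this s'),
      show (∑ s' : ∀ l, S l, ∏ l, w l (s' l) * M l (s' l)) = ∏ l, ∑ y, w l y * M l y
        from pi_sum_prod S (fun l y => w l y * M l y)]
    rw [Finset.prod_eq_single k]
    · congr 1; ext x'; rw [hwk]
    · intro l _ hl
      calc ∑ y, w l y * M l y = ∑ y, M l y := by
            refine Finset.sum_congr rfl fun y _ => by rw [hwl l hl y, one_mul]
        _ = 1 := hMsum l
    · simp
  -- conclude
  intro s'
  rw [hβ' s', hO, hpred, hZk]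
  rw [← Finset.mul_prod_erase Finset.univ (fun l => M l (s' l)) (Finset.mem_univ k)]
  ring
end

section
/- For a POMDP with finitely many beliefs reachable relevant values, if V^pmq satisfies the recursion V^pmq_{τ+1}(𝓑) = R_k̄(b_k̄, ā) + γ ∑_o O_k̄(o|b_k̄, ā) V^pmq_τ(BU(𝓑, ā, o)), where k̄ = argmaxₖ V*_k(bₖ), ā = argmax_{a} Q*_k̄(b_k̄, a), and the optimal sub-problem values satisfy the Bellman recursion V*_{k,τ+1}(b) = max_a [R_k(b,a) + γ ∑_o O_k(o|b,a) V*_{k,τ}(BU(b,a,o))], then for all τ ≥ 1 and all belief collections 𝓑 = (b₁,…,b_K): V^pmq_τ(𝓑) ≥ max_{k∈{1,…,K}} V*_{k,τ}(bₖ). -/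
/-- Lower bound on the value of Parallel Max-Q. If V^pmq satisfies
the Parallel Max-Q recursion (select the sub-POMDP k̄ with maximal value, execute
its maximizing action ā, update component k̄ of the belief collection and leave
the others fixed), and each V*_k satisfies the Bellman recursion, then for all
τ ≥ 1 and all belief collections 𝓑, V^pmq_τ(𝓑) ≥ max_k V*_{k,τ}(bₖ). -/
theorem parallel_max_q_lower_bound
    {K : ℕ}
    (B : Fin K → Type)                        -- belief spaces of the sub-POMDPs
    (A : Fin K → Type)                        -- action sets
    (O : Fin K → Type) [∀ k, Fintype (O k)]   -- observation sets
    (R : ∀ k, B k → A k → ℝ)                  -- expected immediate rewards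
    (Obs : ∀ k, B k → A k → O k → ℝ)          -- observation probabilities
    (BU : ∀ k, B k → A k → O k → B k)         -- Bayesian belief update
    (γ : ℝ) (hγ0 : 0 ≤ γ) (hγ1 : γ < 1)
    (hObsnn : ∀ k b a o, 0 ≤ Obs k b a o)
    (hObssum : ∀ k b a, ∑ o, Obs k b a o = 1)
    -- optimal value and Q functions of the sub-POMDPs (finite horizon)
    (Vstar : ∀ k, ℕ → B k → ℝ) (Qstar : ∀ k, ℕ → B k → A k → ℝ)
    (hV0 : ∀ k b, Vstar k 0 b = 0)
    (hQ : ∀ k τ b a, Qstar k (τ + 1) b a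
        = R k b a + γ * ∑ o, Obs k b a o * Vstar k τ (BU k b a o))
    (hVub : ∀ k τ b a, Qstar k (τ + 1) b a ≤ Vstar k (τ + 1) b)
    (hVach : ∀ k τ b, ∃ a, Vstar k (τ + 1) b = Qstar k (τ + 1) b a)
    -- the sub-POMDP and action selected by Parallel Max-Q
    (kbar : ℕ → (∀ k, B k) → Fin K)
    (abar : ∀ (τ : ℕ) (𝓑 : ∀ k, B k), A (kbar τ 𝓑))
    (hkbar : ∀ τ 𝓑 k, Vstar k τ (𝓑 k) ≤ Vstar (kbar τ 𝓑) τ (𝓑 (kbar τ 𝓑)))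
    (habar : ∀ τ (𝓑 : ∀ k, B k),
      Vstar (kbar (τ + 1) 𝓑) (τ + 1) (𝓑 (kbar (τ + 1) 𝓑))
        = Qstar (kbar (τ + 1) 𝓑) (τ + 1) (𝓑 (kbar (τ + 1) 𝓑)) (abar (τ + 1) 𝓑))
    -- the Parallel Max-Q value function
    (Vpmq : ℕ → (∀ k, B k) → ℝ)
    (hVpmq0 : ∀ 𝓑, Vpmq 0 𝓑 = 0)
    (hVpmq : ∀ τ (𝓑 : ∀ k, B k),
      Vpmq (τ + 1) 𝓑
        = R (kbar (τ + 1) 𝓑) (𝓑 (kbar (τ + 1) 𝓑)) (abar (τ + 1) 𝓑)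
          + γ * ∑ o : O (kbar (τ + 1) 𝓑),
              Obs (kbar (τ + 1) 𝓑) (𝓑 (kbar (τ + 1) 𝓑)) (abar (τ + 1) 𝓑) o
                * Vpmq τ (Function.update 𝓑 (kbar (τ + 1) 𝓑)
                    (BU (kbar (τ + 1) 𝓑) (𝓑 (kbar (τ + 1) 𝓑)) (abar (τ + 1) 𝓑) o))) :
    ∀ τ, 1 ≤ τ → ∀ (𝓑 : ∀ k, B k) (k : Fin K),
      Vstar k τ (𝓑 k) ≤ Vpmq τ 𝓑 := by
  suffices h : ∀ τ (𝓑 : ∀ k, B k) (k : Fin K), Vstar k τ (𝓑 k) ≤ Vpmq τ 𝓑 by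
    exact fun τ _ => h τ
  intro τ
  induction τ with
  | zero => intro 𝓑 k; simp [hV0, hVpmq0]
  | succ τ ih =>
    intro 𝓑 k
    have h1 := hkbar (τ + 1) 𝓑 k
    refine h1.trans ?_
    rw [habar (τ := τ) 𝓑, hQ, hVpmq]
    gcongr with o _
    · exact hObsnn _ _ _ _
    have := ih (Function.update 𝓑 (kbar (τ + 1) 𝓑)
        (BU (kbar (τ + 1) 𝓑) (𝓑 (kbar (τ + 1) 𝓑)) (abar (τ + 1) 𝓑) o)) (kbar (τ + 1) 𝓑)
    simpa [Function.update_self] using this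
end

section
/- If two sub-POMDPs share no state factors (non-overlapping), and the initial global distribution is a product of per-sub-POMDP marginals, then after any finite sequence of actions and observations each drawn from a single sub-POMDP (with static transitions for state factors outside the acting sub-POMDP), the exact Bayesian posterior remains a product of per-sub-POMDP marginals, and each marginal equals the local Bayesian posterior computed within that sub-POMDP using only the actions/observations belonging to it. -/
open Finset

variable {K : ℕ} {S : Fin K → Type}

/-- One execution step: an action/observation pair belonging to a single
sub-POMDP `k`.  `T` is the local transition kernel of the action
(T x' x = T_k(x'|x,a)); `L` is the likelihood of the received observation
(L x' = O_k(o|a,x')).  State factors outside component `k` are static. -/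
structure Step (S : Fin K → Type) where
  k : Fin K
  T : S k → S k → ℝ
  L : S k → ℝ

variable [∀ k, Fintype (S k)] [∀ k, DecidableEq (S k)]

/-- Global transition kernel of a step: component `st.k` moves according to
`st.T`, all other components stay put. -/
noncomputable def gKernel (st : Step S) (s' s : ∀ l, S l) : ℝ :=
  st.T (s' st.k) (s st.k) *
    ∏ l ∈ univ.erase st.k, (if s' l = s l then (1 : ℝ) else 0)

/-- Unnormalized global Bayesian posterior. -/
noncomputable def gPost (β : (∀ l, S l) → ℝ) (st : Step S) (s' : ∀ l, S l) : ℝ :=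
  st.L (s' st.k) * ∑ s : ∀ l, S l, β s * gKernel st s' s

/-- Global normalizer Pr(o | β, a). -/
noncomputable def gZ (β : (∀ l, S l) → ℝ) (st : Step S) : ℝ :=
  ∑ s' : ∀ l, S l, gPost β st s'

/-- Exact global Bayesian belief update. -/
noncomputable def gUpdate (β : (∀ l, S l) → ℝ) (st : Step S) : (∀ l, S l) → ℝ :=
  fun s' => gPost β st s' / gZ β st

/-- Unnormalized local Bayesian posterior for sub-POMDP `l` (a step only
affects component `l` if it belongs to it). -/
noncomputable def lPost (l : Fin K) (b : S l → ℝ) (st : Step S) : S l → ℝ :=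
  if h : st.k = l then
    fun x' => (h ▸ st.L) x' * ∑ x : S l, b x * (h ▸ st.T) x' x
  else b

/-- Local normalizer. -/
noncomputable def lZ (l : Fin K) (b : S l → ℝ) (st : Step S) : ℝ :=
  if st.k = l then ∑ x' : S l, lPost l b st x' else 1

/-- Local Bayesian belief update: apply Bayes' rule within sub-POMDP `l` if the
step belongs to `l`, otherwise leave the local belief unchanged. -/
noncomputable def lUpdate (l : Fin K) (b : S l → ℝ) (st : Step S) : S l → ℝ :=
  if st.k = l then fun x => lPost l b st x / lZ l b st else b

set_option linter.unusedSectionVars false in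
private lemma lPost_self' (st : Step S) (b : S st.k → ℝ) :
    lPost st.k b st = fun x' => st.L x' * ∑ x : S st.k, b x * st.T x' x := by
  rw [lPost, dif_pos rfl]

set_option linter.unusedSectionVars false in
private lemma gPost_fact (b : ∀ l, S l → ℝ) (st : Step S) (s' : ∀ l, S l) :
    gPost (fun s => ∏ l, b l (s l)) st s'
      = lPost st.k (b st.k) st (s' st.k) * ∏ l ∈ univ.erase st.k, b l (s' l) := by
  set f : ∀ l, S l → ℝ := fun l x => b l x *
      (if h : l = st.k then st.T (s' st.k) (h ▸ x) else if s' l = x then 1 else 0) with hf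
  have key : ∀ s : ∀ l, S l,
      (∏ l, b l (s l)) * gKernel st s' s = ∏ l, f l (s l) := by
    intro s
    have h1 : ∏ l, f l (s l)
        = f st.k (s st.k) * ∏ l ∈ univ.erase st.k, f l (s l) :=
      (Finset.mul_prod_erase univ _ (mem_univ st.k)).symm
    have h2 : ∀ l ∈ univ.erase st.k,
        f l (s l) = b l (s l) * (if s' l = s l then 1 else 0) := by
      intro l hl
      rw [hf]; dsimp only; rw [dif_neg (Finset.ne_of_mem_erase hl)]
    rw [h1, Finset.prod_congr rfl h2, Finset.prod_mul_distrib, hf]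
    dsimp only
    rw [dif_pos rfl, gKernel,
      ← Finset.mul_prod_erase univ (fun l => b l (s l)) (mem_univ st.k)]
    ring
  rw [gPost]
  simp only [key]
  rw [← Fintype.prod_sum f,
    ← Finset.mul_prod_erase univ (fun l => ∑ j, f l j) (mem_univ st.k)]
  have h3 : ∀ l ∈ univ.erase st.k, (∑ j, f l j) = b l (s' l) := by
    intro l hl
    have : ∀ x : S l, f l x = if s' l = x then b l x else 0 := by
      intro x
      rw [hf]; dsimp only; rw [dif_neg (Finset.ne_of_mem_erase hl)]
      split <;> simp
    simp only [this]
    simp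
  have h4 : (∑ j, f st.k j) = ∑ x, b st.k x * st.T (s' st.k) x := by
    apply Finset.sum_congr rfl
    intro x _
    rw [hf]; dsimp only; rw [dif_pos rfl]
  rw [Finset.prod_congr rfl h3, h4, lPost_self']
  ring

set_option linter.unusedSectionVars false in
private lemma gZ_fact (b : ∀ l, S l → ℝ) (st : Step S)
    (hsum : ∀ l, l ≠ st.k → ∑ x, b l x = 1) :
    gZ (fun s => ∏ l, b l (s l)) st = lZ st.k (b st.k) st := by
  set g : ∀ l, S l → ℝ := fun l x =>
      if h : l = st.k then lPost st.k (b st.k) st (h ▸ x) else b l x with hg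
  have key : ∀ s' : ∀ l, S l,
      gPost (fun s => ∏ l, b l (s l)) st s' = ∏ l, g l (s' l) := by
    intro s'
    rw [gPost_fact, ← Finset.mul_prod_erase univ (fun l => g l (s' l)) (mem_univ st.k)]
    have h1 : g st.k (s' st.k) = lPost st.k (b st.k) st (s' st.k) := by
      rw [hg]; dsimp only; rw [dif_pos rfl]
    have h2 : ∀ l ∈ univ.erase st.k, g l (s' l) = b l (s' l) := by
      intro l hl
      rw [hg]; dsimp only; rw [dif_neg (Finset.ne_of_mem_erase hl)]
    rw [h1, Finset.prod_congr rfl h2]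
  rw [gZ]
  simp only [key]
  rw [← Fintype.prod_sum g,
    ← Finset.mul_prod_erase univ (fun l => ∑ j, g l j) (mem_univ st.k)]
  have h3 : ∀ l ∈ univ.erase st.k, (∑ j, g l j) = 1 := by
    intro l hl
    have : ∀ x : S l, g l x = b l x := by
      intro x; rw [hg]; dsimp only; rw [dif_neg (Finset.ne_of_mem_erase hl)]
    simp only [this]
    exact hsum l (Finset.ne_of_mem_erase hl)
  have h4 : (∑ j, g st.k j) = ∑ x', lPost st.k (b st.k) st x' := by
    apply Finset.sum_congr rfl
    intro x _
    rw [hg]; dsimp only; rw [dif_pos rfl]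
  rw [Finset.prod_congr rfl h3, h4, Finset.prod_const_one, mul_one, lZ, if_pos rfl]

set_option linter.unusedSectionVars false in
private lemma gUpdate_fact (b : ∀ l, S l → ℝ) (st : Step S)
    (hsum : ∀ l, l ≠ st.k → ∑ x, b l x = 1) (s : ∀ l, S l) :
    gUpdate (fun s => ∏ l, b l (s l)) st s = ∏ l, lUpdate l (b l) st (s l) := by
  rw [gUpdate]
  rw [gPost_fact, gZ_fact b st hsum, mul_div_right_comm,
    ← Finset.mul_prod_erase univ (fun l => lUpdate l (b l) st (s l)) (mem_univ st.k)]
  have h1 : lUpdate st.k (b st.k) st (s st.k)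
      = lPost st.k (b st.k) st (s st.k) / lZ st.k (b st.k) st := by
    rw [lUpdate, if_pos rfl]
  have h2 : ∀ l ∈ univ.erase st.k, lUpdate l (b l) st (s l) = b l (s l) := by
    intro l hl
    rw [lUpdate, if_neg (Ne.symm (Finset.ne_of_mem_erase hl))]
  rw [h1, Finset.prod_congr rfl h2]

set_option linter.unusedSectionVars false in
private lemma lUpdate_sum (b : ∀ l, S l → ℝ) (st : Step S) (l : Fin K)
    (hsum : ∑ x, b l x = 1) (hZ : lZ st.k (b st.k) st ≠ 0) :
    ∑ x, lUpdate l (b l) st x = 1 := by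
  rw [lUpdate]
  by_cases h : st.k = l
  · subst h
    rw [if_pos rfl, ← Finset.sum_div]
    rw [lZ, if_pos rfl] at hZ ⊢
    exact div_self hZ
  · rw [if_neg h]; exact hsum

set_option linter.unusedSectionVars false in
private lemma main_ind (hist : List (Step S)) :
    ∀ (b : ∀ l, S l → ℝ) (β : (∀ l, S l) → ℝ),
      (∀ l, ∑ x, b l x = 1) →
      (∀ s, β s = ∏ l, b l (s l)) →
      (∀ (p : List (Step S)) (st : Step S) (q : List (Step S)),
        hist = p ++ st :: q → lZ st.k (p.foldl (lUpdate st.k) (b st.k)) st ≠ 0) →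
      ∀ s : ∀ l, S l,
        hist.foldl gUpdate β s = ∏ l, (hist.foldl (lUpdate l) (b l)) (s l) := by
  induction hist with
  | nil => intro b β _ hfact _ s; exact hfact s
  | cons st rest ih =>
    intro b β hsum hfact hZ s
    simp only [List.foldl_cons]
    have hβ : gUpdate β st = gUpdate (fun s => ∏ l, b l (s l)) st := by
      funext s'
      have hp : gPost β st = gPost (fun s => ∏ l, b l (s l)) st := by
        funext t
        rw [gPost, gPost]
        congr 1
        apply Finset.sum_congr rfl
        intro u _
        rw [hfact u]
      rw [gUpdate, gUpdate, gZ, gZ, hp]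
    have hZ0 : lZ st.k (b st.k) st ≠ 0 := by
      have := hZ [] st rest rfl
      simpa using this
    refine ih (fun l => lUpdate l (b l) st) (gUpdate β st)
      (fun l => lUpdate_sum b st l (hsum l) hZ0)
      (fun t => by rw [hβ]; exact gUpdate_fact b st (fun l _ => hsum l) t)
      ?_ s
    intro p st' q hpq
    have := hZ (st :: p) st' q (by rw [hpq]; rfl)
    simpa using this

/-- for a non-overlapping decomposition with product initial
distribution and actions/observations each belonging to a single sub-POMDP
(static transitions on the other components), the exact global Bayesian
posterior after any history remains a product of per-sub-POMDP marginals, each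
equal to the local Bayesian posterior computed within its own sub-POMDP. -/
theorem global_posterior_factored
    (b0 : ∀ l, S l → ℝ) (β0 : (∀ l, S l) → ℝ)
    (hb0nn : ∀ l x, 0 ≤ b0 l x) (hb0sum : ∀ l, ∑ x, b0 l x = 1)
    (hfact0 : ∀ s, β0 s = ∏ l, b0 l (s l))
    (hist : List (Step S))
    -- all normalizers along the history are nonzero
    (hZg : ∀ (p : List (Step S)) (st : Step S) (q : List (Step S)),
      hist = p ++ st :: q → gZ (p.foldl gUpdate β0) st ≠ 0)
    (hZl : ∀ (p : List (Step S)) (st : Step S) (q : List (Step S)),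
      hist = p ++ st :: q → lZ st.k (p.foldl (lUpdate st.k) (b0 st.k)) st ≠ 0) :
    ∀ s : ∀ l, S l,
      hist.foldl gUpdate β0 s = ∏ l, (hist.foldl (lUpdate l) (b0 l)) (s l) := by
  intro s
  exact main_ind hist b0 β0 hb0sum hfact0 hZl s
end
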